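/- Any star tree with m leaves embeds isometrically (up to scale) in the Poincaré disk: for any m ≥ 2 and any D > 0, there exist points x₁, …, x_m in the Poincaré disk (unit radius) such that d_D(0, x_i) = D for all i and d_D(x_i, x_j) ≥ 2D − C for all i ≠ j, where C is a constant depending only on m (not on D). -/

import Mathlib

noncomputable def artanh (x : ℝ) : ℝ := (1 / 2) * Real.log ((1 + x) / (1 - x))

noncomputable def mobiusAdd (r : ℝ) {n : ℕ} (a b : EuclideanSpace ℝ (Fin n)) :
    EuclideanSpace ℝ (Fin n) :=
  (1 / (1 + 2 * (inner ℝ a b : ℝ) / r ^ 2 + ‖a‖ ^ 2 * ‖b‖ ^ 2 / r ^ 4)) •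
    ((1 + 2 * (inner ℝ a b : ℝ) / r ^ 2 + ‖b‖ ^ 2 / r ^ 2) • a + (1 - ‖a‖ ^ 2 / r ^ 2) • b)

noncomputable def pDist (r : ℝ) {n : ℕ} (p q : EuclideanSpace ℝ (Fin n)) : ℝ :=
  2 * r * artanh (‖mobiusAdd r (-p) q‖ / r)

/-!
Put the points at Euclidean radius `t = tanh (D / 2)` in the directions `2πi/m`. For unit vectors
`u, v` with `⟪u, v⟫ = c`, the Möbius identity
`1 - ‖(-x) ⊕ y‖² = (1 - ‖x‖²)(1 - ‖y‖²) / (1 + 2⟪x, y⟫ + ‖x‖²‖y‖²)` gives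
`1 - ‖(-(t • u)) ⊕ (t • v)‖² = (1 - t²)² / (1 - 2t²c + t⁴)`. As `d = 2 artanh s ≥ -log (1 - s²)`,
`1 - t² = cosh⁻² (D/2)`, `cosh (D/2) ≥ e^{D/2} / 2` and `1 - 2t²c + t⁴ ≥ (1 - c) / 2`, this yields
`d(t • u, t • v) ≥ 2D - log (32 / (1 - c))`; distinct directions have `c ≤ cos (2π/m) < 1`.
-/

open Real
open scoped RealInnerProductSpace

theorem one_sub_norm_mobiusAdd_sq {n : ℕ} (a b : EuclideanSpace ℝ (Fin n))
    (h : 1 + 2 * ⟪a, b⟫ + ‖a‖ ^ 2 * ‖b‖ ^ 2 ≠ 0) :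
    1 - ‖mobiusAdd 1 a b‖ ^ 2
      = (1 - ‖a‖ ^ 2) * (1 - ‖b‖ ^ 2) / (1 + 2 * ⟪a, b⟫ + ‖a‖ ^ 2 * ‖b‖ ^ 2) := by
  simp only [mobiusAdd, one_pow, div_one, norm_smul, mul_pow, norm_add_sq_real,
    inner_smul_left, inner_smul_right, Real.norm_eq_abs, sq_abs, conj_trivial]
  field_simp
  ring

theorem one_sub_norm_mobiusAdd_neg_smul_smul_sq {n : ℕ} {u v : EuclideanSpace ℝ (Fin n)}
    (hu : ‖u‖ = 1) (hv : ‖v‖ = 1) (t : ℝ) (h : 1 - 2 * t ^ 2 * ⟪u, v⟫ + t ^ 4 ≠ 0) :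
    1 - ‖mobiusAdd 1 (-(t • u)) (t • v)‖ ^ 2
      = (1 - t ^ 2) ^ 2 / (1 - 2 * t ^ 2 * ⟪u, v⟫ + t ^ 4) := by
  have hden : 1 + 2 * ⟪-(t • u), t • v⟫ + ‖-(t • u)‖ ^ 2 * ‖t • v‖ ^ 2
      = 1 - 2 * t ^ 2 * ⟪u, v⟫ + t ^ 4 := by
    simp only [norm_neg, norm_smul, hu, hv, inner_neg_left, real_inner_smul_left,
      real_inner_smul_right, Real.norm_eq_abs, mul_one, sq_abs]
    ring
  rw [one_sub_norm_mobiusAdd_sq _ _ (hden ▸ h), hden]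
  simp only [norm_neg, norm_smul, hu, hv, Real.norm_eq_abs, mul_one, sq_abs]
  ring

theorem pDist_one_eq {n : ℕ} (p q : EuclideanSpace ℝ (Fin n)) :
    pDist 1 p q = 2 * _root_.artanh ‖mobiusAdd 1 (-p) q‖ := by
  simp [pDist]

theorem pDist_zero_left {n : ℕ} (q : EuclideanSpace ℝ (Fin n)) :
    pDist 1 0 q = 2 * _root_.artanh ‖q‖ := by
  simp [pDist, mobiusAdd]

theorem artanh_eq_real_artanh {x : ℝ} (hx : x ∈ Set.Icc (-1) 1) :
    _root_.artanh x = Real.artanh x :=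
  (Real.artanh_eq_half_log hx).symm

theorem neg_log_one_sub_sq_le_two_mul_artanh {s : ℝ} (hs0 : 0 ≤ s) (hs1 : s < 1) :
    -log (1 - s ^ 2) ≤ 2 * _root_.artanh s := by
  have h1 : 0 < 1 - s ^ 2 := by nlinarith
  rw [_root_.artanh, ← Real.log_inv]
  calc log (1 - s ^ 2)⁻¹ ≤ log ((1 + s) / (1 - s)) := by
        apply Real.log_le_log (inv_pos.2 h1)
        rw [inv_eq_one_div, div_le_div_iff₀ h1 (by linarith)]
        nlinarith
    _ = 2 * (1 / 2 * log ((1 + s) / (1 - s))) := by ring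

namespace Real

theorem one_sub_tanh_sq (x : ℝ) : 1 - tanh x ^ 2 = (cosh x ^ 2)⁻¹ := by
  have := cosh_pos x
  rw [tanh_eq_sinh_div_cosh, div_pow, cosh_sq]
  field_simp
  ring

theorem tanh_pos {x : ℝ} (hx : 0 < x) : 0 < tanh x := by
  rw [tanh_eq_sinh_div_cosh]
  exact div_pos (sinh_pos_iff.2 hx) (cosh_pos x)

theorem sub_log_two_le_log_cosh (x : ℝ) : x - log 2 ≤ log (cosh x) := by
  rw [← Real.log_exp x, ← Real.log_div (exp_pos x).ne' two_ne_zero, Real.log_exp]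
  apply Real.log_le_log (by positivity)
  rw [cosh_eq]
  linarith [exp_pos (-x)]

end Real

theorem two_mul_sub_log_le_pDist_tanh_smul {n : ℕ} {u v : EuclideanSpace ℝ (Fin n)}
    (hu : ‖u‖ = 1) (hv : ‖v‖ = 1) (huv : ⟪u, v⟫ < 1) (D : ℝ) :
    2 * D - log (32 / (1 - ⟪u, v⟫)) ≤ pDist 1 (tanh (D / 2) • u) (tanh (D / 2) • v) := by
  set t := tanh (D / 2)
  set c := ⟪u, v⟫
  set s := ‖mobiusAdd 1 (-(t • u)) (t • v)‖
  have hc : -1 ≤ c := neg_one_le_real_inner_of_norm_eq_one hu hv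
  -- `1 - 2t²c + t⁴ = (1 - t²)² + 2t²(1 - c) ≥ (1 - c)/2 · (1 + t²)²`, using `1 - c ≤ 2`
  have hden : (1 - c) / 2 ≤ 1 - 2 * t ^ 2 * c + t ^ 4 := by
    nlinarith [mul_nonneg (sq_nonneg (1 - t ^ 2)) (by linarith : 0 ≤ 1 + c), sq_nonneg t,
      mul_nonneg (sq_nonneg t) (by linarith : 0 ≤ 1 - c)]
  have hden0 : 0 < 1 - 2 * t ^ 2 * c + t ^ 4 := by linarith
  have h1s : 1 - s ^ 2 = (cosh (D / 2) ^ 4 * (1 - 2 * t ^ 2 * c + t ^ 4))⁻¹ := by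
    rw [one_sub_norm_mobiusAdd_neg_smul_smul_sq hu hv t hden0.ne', one_sub_tanh_sq,
      show ⟪u, v⟫ = c from rfl]
    have := cosh_pos (D / 2)
    field_simp
  have hs1 : s < 1 := by
    have : 0 < 1 - s ^ 2 := by rw [h1s]; positivity
    nlinarith [norm_nonneg (mobiusAdd 1 (-(t • u)) (t • v))]
  have hlog32 : log 32 = 5 * log 2 := by
    rw [show (32 : ℝ) = 2 ^ 5 by norm_num, Real.log_pow]
    norm_num
  calc 2 * D - log (32 / (1 - c))
      = log ((1 - c) / 2) + 4 * (D / 2 - log 2) := by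
        rw [Real.log_div (by norm_num) (by linarith), Real.log_div (by linarith) (by norm_num),
          hlog32]
        ring
    _ ≤ log (1 - 2 * t ^ 2 * c + t ^ 4) + 4 * log (cosh (D / 2)) := by
        have := sub_log_two_le_log_cosh (D / 2)
        exact add_le_add (Real.log_le_log (by linarith) hden) (by linarith)
    _ = -log (1 - s ^ 2) := by
        rw [h1s, Real.log_inv, Real.log_mul (by positivity) hden0.ne', Real.log_pow]
        push_cast
        ring
    _ ≤ 2 * _root_.artanh s := neg_log_one_sub_sq_le_two_mul_artanh (norm_nonneg _) hs1
    _ = pDist 1 (t • u) (t • v) := (pDist_one_eq _ _).symm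

namespace Real

theorem cos_le_cos_of_le_of_le_two_pi_sub {a x : ℝ} (ha : 0 ≤ a) (hax : a ≤ x)
    (hxa : x ≤ 2 * π - a) : cos x ≤ cos a := by
  rcases le_or_gt x π with hxπ | hπx
  · exact cos_le_cos_of_nonneg_of_le_pi ha hxπ hax
  · rw [← cos_two_pi_sub]
    exact cos_le_cos_of_nonneg_of_le_pi ha (by linarith) (by linarith)

theorem cos_two_pi_mul_div_le {m : ℕ} {k : ℤ} (hk : k ≠ 0) (hkm : |k| < m) :
    cos (2 * π * k / m) ≤ cos (2 * π / m) := by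
  have hm : (0 : ℝ) < m := by exact_mod_cast (abs_nonneg k).trans_lt hkm
  have hk1 : (1 : ℝ) ≤ |(k : ℝ)| := by exact_mod_cast Int.one_le_abs hk
  have hkm' : |(k : ℝ)| + 1 ≤ m := by exact_mod_cast hkm
  rw [← cos_abs, abs_div, abs_mul, abs_of_pos two_pi_pos, abs_of_pos hm]
  apply cos_le_cos_of_le_of_le_two_pi_sub (by positivity)
  · exact div_le_div_of_nonneg_right (le_mul_of_one_le_right two_pi_pos.le hk1) hm.le
  · rw [div_le_iff₀ hm]
    field_simp
    nlinarith [pi_pos]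

theorem cos_two_pi_div_lt_one {m : ℕ} (hm : 2 ≤ m) : cos (2 * π / m) < 1 := by
  have hm' : (2 : ℝ) ≤ m := by exact_mod_cast hm
  rw [← cos_zero]
  apply cos_lt_cos_of_nonneg_of_le_pi le_rfl
  · rw [div_le_iff₀ (by linarith)]
    nlinarith [pi_pos]
  · positivity

end Real

noncomputable def unitVec (θ : ℝ) : EuclideanSpace ℝ (Fin 2) := !₂[cos θ, sin θ]

theorem inner_unitVec (θ φ : ℝ) : ⟪unitVec θ, unitVec φ⟫ = cos (θ - φ) := by
  simp [unitVec, PiLp.inner_apply, Fin.sum_univ_two, cos_sub]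
  ring

theorem norm_unitVec (θ : ℝ) : ‖unitVec θ‖ = 1 := by
  simp [unitVec, EuclideanSpace.norm_eq, Fin.sum_univ_two]

theorem inner_unitVec_two_pi_mul_div_le {m : ℕ} {i j : Fin m} (hij : i ≠ j) :
    ⟪unitVec (2 * π * i / m), unitVec (2 * π * j / m)⟫ ≤ cos (2 * π / m) := by
  have hk : (i : ℤ) - j ≠ 0 := sub_ne_zero.2 (by exact_mod_cast Fin.val_injective.ne hij)
  have hkm : |(i : ℤ) - j| < m := by
    rw [abs_lt]
    constructor <;> omega
  calc _ = cos (2 * π * ((i - j : ℤ) : ℝ) / m) := by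
        rw [inner_unitVec]
        push_cast
        ring_nf
    _ ≤ _ := cos_two_pi_mul_div_le hk hkm

theorem star_tree_embeds_in_poincare_disk :
    ∀ m : ℕ, 2 ≤ m → ∃ C : ℝ, ∀ D : ℝ, 0 < D →
      ∃ x : Fin m → EuclideanSpace ℝ (Fin 2),
        (∀ i, pDist 1 0 (x i) = D) ∧
        (∀ i j, i ≠ j → 2 * D - C ≤ pDist 1 (x i) (x j)) := by
  intro m hm
  refine ⟨log (32 / (1 - cos (2 * π / m))), fun D hD =>
    ⟨fun i => tanh (D / 2) • unitVec (2 * π * i / m), fun i => ?_, fun i j hij => ?_⟩⟩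
  · have ht : 0 < tanh (D / 2) := tanh_pos (by linarith)
    rw [pDist_zero_left, norm_smul, norm_unitVec, mul_one, Real.norm_eq_abs, abs_of_pos ht,
      artanh_eq_real_artanh ⟨by linarith, (tanh_lt_one _).le⟩, Real.artanh_tanh]
    ring
  · have hle := inner_unitVec_two_pi_mul_div_le hij
    have hlt := cos_two_pi_div_lt_one hm
    have hpos : 0 < 1 - ⟪unitVec (2 * π * i / m), unitVec (2 * π * j / m)⟫ := by linarith
    calc 2 * D - log (32 / (1 - cos (2 * π / m)))
        ≤ 2 * D - log (32 / (1 - ⟪unitVec (2 * π * i / m), unitVec (2 * π * j / m)⟫)) := by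
          gcongr
      _ ≤ _ := two_mul_sub_log_le_pDist_tanh_smul (norm_unitVec _) (norm_unitVec _)
          (hle.trans_lt hlt) D
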